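/- arXiv:2512.24349 — 2 statements merged into one kernel-verified Lean document; each statement's English description precedes it below -/
import Mathlib

section
/- Among all fractions p/q with positive integers q ≤ 113, the fraction 355/113 is the best rational approximation to π: for any integers p and q with 1 ≤ q ≤ 113, |π - p/q| ≥ |π - 355/113|. -/
theorem best_rational_approx_pi (p q : ℤ) (hq1 : 1 ≤ q) (hq2 : q ≤ 113) :
    |Real.pi - (p : ℝ) / (q : ℝ)| ≥ |Real.pi - 355/113| := by
  have hpi_lt := Real.pi_lt_d6
  have hpi_gt := Real.pi_gt_d6
  have hε : |Real.pi - 355/113| < 1e-6 := by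
    rw [abs_lt]; constructor <;> nlinarith
  by_cases h : (p : ℝ) / q = 355 / 113
  · rw [h]
  · have hq0 : (0:ℝ) < (q:ℝ) := by exact_mod_cast hq1
    have hd : (113 * p - 355 * q : ℤ) ≠ 0 := by
      intro hd0
      apply h
      have h113 : (113:ℝ) * p = 355 * q := by exact_mod_cast sub_eq_zero.mp hd0
      field_simp
      linarith
    have hd1 : (1:ℝ) ≤ |((113 * p - 355 * q : ℤ) : ℝ)| := by
      have := Int.one_le_abs hd
      exact_mod_cast this
    have hqle : (q:ℝ) ≤ 113 := by exact_mod_cast hq2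
    have key : (1:ℝ) / 12769 ≤ |(p:ℝ)/q - 355/113| := by
      have heq : (p:ℝ)/q - 355/113 = ((113 * p - 355 * q : ℤ) : ℝ) / (113 * q) := by
        push_cast; field_simp
      rw [heq, abs_div, abs_of_pos (by positivity : (0:ℝ) < 113 * q)]
      rw [div_le_div_iff₀ (by norm_num) (by positivity)]
      nlinarith
    have htri : |(p:ℝ)/q - 355/113| ≤ |Real.pi - (p:ℝ)/q| + |Real.pi - 355/113| := by
      calc |(p:ℝ)/q - 355/113| ≤ |(p:ℝ)/q - Real.pi| + |Real.pi - 355/113| :=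
            abs_sub_le _ _ _
        _ = |Real.pi - (p:ℝ)/q| + |Real.pi - 355/113| := by rw [abs_sub_comm]
    linarith
end

section
/- Euclid's parallel postulate in the transversal form holds in ℝ²: if two distinct lines L₁ and L₂ in the Euclidean plane are both crossed by a transversal line T, and the interior angles on one side of T sum to less than π, then L₁ and L₂ intersect on that side of T. -/
open scoped RealInnerProductSpace

open EuclideanGeometry

private lemma euclid_key (A₁ B₁ N₁ A₂ B₂ N₂ ν : ℝ) (hN₁ : 0 < N₁) (hN₂ : 0 < N₂)
    (hB₁ : 0 < B₁) (hB₂ : 0 < B₂)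
    (h1 : A₁^2 + B₁^2 = ν * N₁^2) (h2 : A₂^2 + B₂^2 = ν * N₂^2)
    (hc : A₂ * N₁ < A₁ * N₂) : A₂ * B₁ < A₁ * B₂ := by
  have hν : 0 < ν := by nlinarith [sq_nonneg A₁]
  by_contra hE
  push_neg at hE
  have hid : (A₁*B₂ - A₂*B₁)*(B₁*N₂ + B₂*N₁) = (A₁*N₂ - A₂*N₁)*(ν*N₁*N₂ + B₁*B₂ + A₁*A₂) := by
    linear_combination (A₁*N₁) * h2 - (A₂*N₂) * h1
  have hlag : (A₁*B₂ - A₂*B₁)^2 + (A₁*A₂ + B₁*B₂)^2 = (ν*N₁*N₂)^2 := by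
    linear_combination (A₂^2 + B₂^2) * h1 + (ν * N₁^2) * h2
  have hf : 0 ≤ ν*N₁*N₂ + B₁*B₂ + A₁*A₂ := by
    nlinarith [sq_nonneg (A₁*B₂ - A₂*B₁), mul_pos (mul_pos hν hN₁) hN₂]
  have hBN : 0 < B₁*N₂ + B₂*N₁ := by positivity
  have hc' : 0 < A₁*N₂ - A₂*N₁ := by linarith
  have hE0 : A₁*B₂ - A₂*B₁ = 0 := by nlinarith
  have hf0 : ν*N₁*N₂ + B₁*B₂ + A₁*A₂ = 0 := by nlinarith
  nlinarith [mul_pos hB₁ hB₂, mul_pos (mul_pos hν hN₁) hN₂, sq_nonneg (A₁*B₂)]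

private lemma euclid_inner_coords (v w : EuclideanSpace ℝ (Fin 2)) :
    ⟪v, w⟫ = v 0 * w 0 + v 1 * w 1 := by
  simp [PiLp.inner_apply, Fin.sum_univ_two, RCLike.inner_apply, conj_trivial]
  ring

private lemma euclid_norm_sq_coords (v : EuclideanSpace ℝ (Fin 2)) :
    ‖v‖^2 = v 0^2 + v 1^2 := by
  rw [EuclideanSpace.norm_eq, Real.sq_sqrt (by positivity)]
  simp [Fin.sum_univ_two, sq_abs]

set_option maxHeartbeats 1000000 in
theorem euclid_fifth_postulate
    (L₁ L₂ T : AffineSubspace ℝ (EuclideanSpace ℝ (Fin 2)))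
    (hL₁ : Module.finrank ℝ L₁.direction = 1)
    (hL₂ : Module.finrank ℝ L₂.direction = 1)
    (hT : Module.finrank ℝ T.direction = 1)
    (hne : L₁ ≠ L₂)
    (P₁ P₂ Q₁ Q₂ : EuclideanSpace ℝ (Fin 2))
    (hP₁ : P₁ ∈ L₁) (hP₁T : P₁ ∈ T) (hP₂ : P₂ ∈ L₂) (hP₂T : P₂ ∈ T)
    (hP : P₁ ≠ P₂)
    (hQ₁ : Q₁ ∈ L₁) (hQ₂ : Q₂ ∈ L₂)
    (hside : T.SSameSide Q₁ Q₂)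
    (hangles : ∠ Q₁ P₁ P₂ + ∠ Q₂ P₂ P₁ < Real.pi) :
    ∃ X, X ∈ L₁ ∧ X ∈ L₂ ∧ T.SSameSide X Q₁ := by
  classical
  obtain ⟨⟨p₁, hp₁, p₂, hp₂, hray⟩, hQ₁T, hQ₂T⟩ := hside
  set u : EuclideanSpace ℝ (Fin 2) := P₂ - P₁ with hu_def
  have hu : u ≠ 0 := sub_ne_zero.mpr (Ne.symm hP)
  have hupos : 0 < ‖u‖ := norm_pos_iff.mpr hu
  have hu0 : u 0 = P₂ 0 - P₁ 0 := rfl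
  have hu1 : u 1 = P₂ 1 - P₁ 1 := rfl
  set ν : ℝ := u 0 ^ 2 + u 1 ^ 2 with hν_def
  have hνnorm : ν = ‖u‖ ^ 2 := by rw [hν_def, euclid_norm_sq_coords]
  have hν : 0 < ν := by rw [hνnorm]; positivity
  have humem : u ∈ T.direction := by
    have := AffineSubspace.vsub_mem_direction hP₂T hP₁T
    simpa [vsub_eq_sub] using this
  have hTdir : T.direction = Submodule.span ℝ {u} := by
    symm
    apply Submodule.eq_of_le_of_finrank_eq
    · exact (Submodule.span_singleton_le_iff_mem _ _).mpr humem
    · rw [finrank_span_singleton hu, hT]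
  have mem_dir : ∀ v : EuclideanSpace ℝ (Fin 2),
      v ∈ T.direction ↔ u 0 * v 1 - u 1 * v 0 = 0 := by
    intro v
    rw [hTdir, Submodule.mem_span_singleton]
    constructor
    · rintro ⟨c, rfl⟩
      have e0 : (c • u) 0 = c * u 0 := rfl
      have e1 : (c • u) 1 = c * u 1 := rfl
      rw [e0, e1]; ring
    · intro h
      refine ⟨(u 0 * v 0 + u 1 * v 1) / ν, ?_⟩
      have h0 : (((u 0 * v 0 + u 1 * v 1) / ν) • u) 0 = v 0 := by
        show (u 0 * v 0 + u 1 * v 1) / ν * u 0 = v 0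
        rw [div_mul_eq_mul_div, div_eq_iff hν.ne', hν_def]
        linear_combination (u 1) * h
      have h1 : (((u 0 * v 0 + u 1 * v 1) / ν) • u) 1 = v 1 := by
        show (u 0 * v 0 + u 1 * v 1) / ν * u 1 = v 1
        rw [div_mul_eq_mul_div, div_eq_iff hν.ne', hν_def]
        linear_combination (-(u 0)) * h
      ext i
      fin_cases i <;> assumption
  set v₁ : EuclideanSpace ℝ (Fin 2) := Q₁ - P₁ with hv₁def
  set v₂ : EuclideanSpace ℝ (Fin 2) := Q₂ - P₂ with hv₂def
  have hv₁0 : v₁ 0 = Q₁ 0 - P₁ 0 := rfl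
  have hv₁1 : v₁ 1 = Q₁ 1 - P₁ 1 := rfl
  have hv₂0 : v₂ 0 = Q₂ 0 - P₂ 0 := rfl
  have hv₂1 : v₂ 1 = Q₂ 1 - P₂ 1 := rfl
  have hv₁ne : v₁ ≠ 0 := by
    rw [hv₁def]
    exact sub_ne_zero.mpr (fun h => hQ₁T (h ▸ hP₁T))
  have hv₂ne : v₂ ≠ 0 := by
    rw [hv₂def]
    exact sub_ne_zero.mpr (fun h => hQ₂T (h ▸ hP₂T))
  have hN₁ : 0 < ‖v₁‖ := norm_pos_iff.mpr hv₁ne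
  have hN₂ : 0 < ‖v₂‖ := norm_pos_iff.mpr hv₂ne
  set A₁ : ℝ := v₁ 0 * u 0 + v₁ 1 * u 1 with hA₁def
  set B₁ : ℝ := u 0 * v₁ 1 - u 1 * v₁ 0 with hB₁def
  set A₂ : ℝ := v₂ 0 * u 0 + v₂ 1 * u 1 with hA₂def
  set B₂ : ℝ := u 0 * v₂ 1 - u 1 * v₂ 0 with hB₂def
  -- B₁, B₂ nonzero
  have hB₁ne : B₁ ≠ 0 := by
    intro h
    apply hQ₁T
    have hm : v₁ ∈ T.direction := (mem_dir v₁).mpr (by rw [← hB₁def]; exact h)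
    exact (AffineSubspace.vsub_right_mem_direction_iff_mem hP₁T Q₁).mp
      (by simpa [vsub_eq_sub, ← hv₁def] using hm)
  have hB₂ne : B₂ ≠ 0 := by
    intro h
    apply hQ₂T
    have hm : v₂ ∈ T.direction := (mem_dir v₂).mpr (by rw [← hB₂def]; exact h)
    exact (AffineSubspace.vsub_right_mem_direction_iff_mem hP₂T Q₂).mp
      (by simpa [vsub_eq_sub, ← hv₂def] using hm)
  -- same side gives B₁ * B₂ > 0
  have hp₁Q : Q₁ -ᵥ p₁ ≠ 0 := by
    simp only [vsub_eq_sub]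
    exact sub_ne_zero.mpr (fun h => hQ₁T (h ▸ hp₁))
  have hp₂Q : Q₂ -ᵥ p₂ ≠ 0 := by
    simp only [vsub_eq_sub]
    exact sub_ne_zero.mpr (fun h => hQ₂T (h ▸ hp₂))
  obtain ⟨r₁, r₂, hr₁, hr₂, hr⟩ := hray.exists_pos hp₁Q hp₂Q
  have hdp₁ : u 0 * (p₁ 1 - P₁ 1) - u 1 * (p₁ 0 - P₁ 0) = 0 := by
    have := (mem_dir (p₁ - P₁)).mp
      (by simpa [vsub_eq_sub] using AffineSubspace.vsub_mem_direction hp₁ hP₁T)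
    simpa using this
  have hdp₂ : u 0 * (p₂ 1 - P₁ 1) - u 1 * (p₂ 0 - P₁ 0) = 0 := by
    have := (mem_dir (p₂ - P₁)).mp
      (by simpa [vsub_eq_sub] using AffineSubspace.vsub_mem_direction hp₂ hP₁T)
    simpa using this
  have hd1 : u 0 * (Q₁ -ᵥ p₁) 1 - u 1 * (Q₁ -ᵥ p₁) 0 = B₁ := by
    have e0 : (Q₁ -ᵥ p₁) 0 = Q₁ 0 - p₁ 0 := rfl
    have e1 : (Q₁ -ᵥ p₁) 1 = Q₁ 1 - p₁ 1 := rfl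
    rw [e0, e1, hB₁def]
    linear_combination (-1 : ℝ) * hdp₁ - u 0 * hv₁1 + u 1 * hv₁0
  have hd2 : u 0 * (Q₂ -ᵥ p₂) 1 - u 1 * (Q₂ -ᵥ p₂) 0 = B₂ := by
    have e0 : (Q₂ -ᵥ p₂) 0 = Q₂ 0 - p₂ 0 := rfl
    have e1 : (Q₂ -ᵥ p₂) 1 = Q₂ 1 - p₂ 1 := rfl
    rw [e0, e1, hB₂def]
    linear_combination (-1 : ℝ) * hdp₂ - u 0 * hv₂1 + u 1 * hv₂0 - u 0 * hu1 + u 1 * hu0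
  have hrB : r₁ * B₁ = r₂ * B₂ := by
    have hcongr := congrArg
      (fun w : EuclideanSpace ℝ (Fin 2) => u 0 * w 1 - u 1 * w 0) hr
    have e1 : (r₁ • (Q₁ -ᵥ p₁)) 1 = r₁ * (Q₁ -ᵥ p₁) 1 := rfl
    have e0 : (r₁ • (Q₁ -ᵥ p₁)) 0 = r₁ * (Q₁ -ᵥ p₁) 0 := rfl
    have f1 : (r₂ • (Q₂ -ᵥ p₂)) 1 = r₂ * (Q₂ -ᵥ p₂) 1 := rfl
    have f0 : (r₂ • (Q₂ -ᵥ p₂)) 0 = r₂ * (Q₂ -ᵥ p₂) 0 := rfl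
    simp only [e0, e1, f0, f1] at hcongr
    rw [← hd1, ← hd2]
    linear_combination hcongr
  have hBB : 0 < B₁ * B₂ := by
    have h1 : r₁ * B₁^2 = r₂ * (B₁ * B₂) := by linear_combination B₁ * hrB
    have h2 : 0 ≤ B₁ * B₂ := by nlinarith [sq_nonneg B₁, mul_nonneg hr₁.le (sq_nonneg B₁)]
    exact lt_of_le_of_ne h2 (Ne.symm (mul_ne_zero hB₁ne hB₂ne))
  -- angle condition
  have hcos1 : Real.cos (∠ Q₁ P₁ P₂) = A₁ / (‖v₁‖ * ‖u‖) := by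
    rw [show (∠ Q₁ P₁ P₂) = InnerProductGeometry.angle v₁ u from rfl,
      InnerProductGeometry.cos_angle, euclid_inner_coords, hA₁def]
  have hcos2 : Real.cos (∠ Q₂ P₂ P₁) = -A₂ / (‖v₂‖ * ‖u‖) := by
    have hPu : (P₁ - P₂ : EuclideanSpace ℝ (Fin 2)) = -u := by rw [hu_def]; abel
    have hn0 : (-u : EuclideanSpace ℝ (Fin 2)) 0 = -(u 0) := rfl
    have hn1 : (-u : EuclideanSpace ℝ (Fin 2)) 1 = -(u 1) := rfl
    rw [show (∠ Q₂ P₂ P₁) = InnerProductGeometry.angle v₂ (P₁ - P₂) from rfl, hPu,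
      InnerProductGeometry.cos_angle, euclid_inner_coords, norm_neg, hn0, hn1, hA₂def]
    ring
  have hlt : Real.cos (Real.pi - ∠ Q₂ P₂ P₁) < Real.cos (∠ Q₁ P₁ P₂) := by
    apply Real.strictAntiOn_cos
      (Set.mem_Icc.mpr ⟨angle_nonneg _ _ _, angle_le_pi _ _ _⟩)
      (Set.mem_Icc.mpr ⟨by linarith [angle_le_pi Q₂ P₂ P₁], by linarith [angle_nonneg Q₂ P₂ P₁]⟩)
    linarith
  rw [Real.cos_pi_sub, hcos1, hcos2, neg_div, neg_neg] at hlt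
  have hc : A₂ * ‖v₁‖ < A₁ * ‖v₂‖ := by
    rw [div_lt_div_iff₀ (by positivity) (by positivity)] at hlt
    by_contra h
    push_neg at h
    nlinarith
  -- Pythagoras
  have hpy1 : A₁^2 + B₁^2 = ν * ‖v₁‖^2 := by
    rw [euclid_norm_sq_coords, hA₁def, hB₁def, hν_def]; ring
  have hpy2 : A₂^2 + B₂^2 = ν * ‖v₂‖^2 := by
    rw [euclid_norm_sq_coords, hA₂def, hB₂def, hν_def]; ring
  -- sign normalization
  obtain ⟨ε, hεsq, hεB₁, hεB₂⟩ : ∃ ε : ℝ, ε^2 = 1 ∧ 0 < ε * B₁ ∧ 0 < ε * B₂ := by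
    rcases lt_or_gt_of_ne hB₁ne with h | h <;> rcases lt_or_gt_of_ne hB₂ne with h' | h'
    · exact ⟨-1, by norm_num, by rw [neg_one_mul]; exact neg_pos.mpr h,
        by rw [neg_one_mul]; exact neg_pos.mpr h'⟩
    · exact absurd hBB (asymm (mul_neg_of_neg_of_pos h h'))
    · exact absurd hBB (asymm (mul_neg_of_pos_of_neg h h'))
    · exact ⟨1, by norm_num, by rw [one_mul]; exact h, by rw [one_mul]; exact h'⟩
  have hεne : ε ≠ 0 := by intro h; rw [h] at hεsq; norm_num at hεsq
  have keyres := euclid_key A₁ (ε*B₁) ‖v₁‖ A₂ (ε*B₂) ‖v₂‖ ν hN₁ hN₂ hεB₁ hεB₂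
    (by linear_combination B₁^2 * hεsq + hpy1)
    (by linear_combination B₂^2 * hεsq + hpy2) hc
  set E : ℝ := A₁ * B₂ - A₂ * B₁ with hEdef
  have hεE : 0 < ε * E := by
    have h : ε * E = A₁ * (ε*B₂) - A₂ * (ε*B₁) := by rw [hEdef]; ring
    linarith [keyres, h.ge, h.le]
  have hEne : E ≠ 0 := by
    intro h
    rw [h, mul_zero] at hεE
    exact lt_irrefl 0 hεE
  set s : ℝ := B₂ * ν / E with hsdef
  set t : ℝ := B₁ * ν / E with htdef
  have hs : 0 < s := by
    have h : s = (ε * B₂) * ν / (ε * E) := by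
      rw [hsdef, mul_assoc, mul_div_mul_left _ _ hεne]
    rw [h]
    exact div_pos (mul_pos hεB₂ hν) hεE
  have ht : 0 < t := by
    have h : t = (ε * B₁) * ν / (ε * E) := by
      rw [htdef, mul_assoc, mul_div_mul_left _ _ hεne]
    rw [h]
    exact div_pos (mul_pos hεB₁ hν) hεE
  -- the intersection point
  have hvec : s • v₁ - t • v₂ = u := by
    have h0 : (s • v₁ - t • v₂) 0 = u 0 := by
      show s * v₁ 0 - t * v₂ 0 = u 0
      rw [hsdef, htdef, div_mul_eq_mul_div, div_mul_eq_mul_div, div_sub_div_same,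
        div_eq_iff hEne, hEdef, hA₁def, hA₂def, hB₁def, hB₂def, hν_def]
      ring
    have h1 : (s • v₁ - t • v₂) 1 = u 1 := by
      show s * v₁ 1 - t * v₂ 1 = u 1
      rw [hsdef, htdef, div_mul_eq_mul_div, div_mul_eq_mul_div, div_sub_div_same,
        div_eq_iff hEne, hEdef, hA₁def, hA₂def, hB₁def, hB₂def, hν_def]
      ring
    ext i
    fin_cases i <;> assumption
  refine ⟨s • v₁ + P₁, ?_, ?_, ?_⟩
  · have := L₁.smul_vsub_vadd_mem s hQ₁ hP₁ hP₁
    simpa [vsub_eq_sub, vadd_eq_add, ← hv₁def] using this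
  · have hX2 : s • v₁ + P₁ = t • v₂ + P₂ := by
      rw [← sub_eq_zero]
      have h := hvec
      rw [hu_def] at h
      rw [show s • v₁ + P₁ - (t • v₂ + P₂) = (s • v₁ - t • v₂) - (P₂ - P₁) by abel, h,
        sub_self]
    rw [hX2]
    have := L₂.smul_vsub_vadd_mem t hQ₂ hP₂ hP₂
    simpa [vsub_eq_sub, vadd_eq_add, ← hv₂def] using this
  · refine ⟨⟨P₁, hP₁T, P₁, hP₁T, ?_⟩, ?_, hQ₁T⟩
    · have h1 : (s • v₁ + P₁) -ᵥ P₁ = s • v₁ := by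
        simp [vsub_eq_sub]
      have h2 : Q₁ -ᵥ P₁ = v₁ := by rw [vsub_eq_sub, hv₁def]
      rw [h1, h2]
      exact SameRay.sameRay_pos_smul_left v₁ hs
    · intro hmem
      have hmd : s • v₁ ∈ T.direction := by
        have := AffineSubspace.vsub_mem_direction hmem hP₁T
        simpa [vsub_eq_sub] using this
      have hd : u 0 * (s • v₁) 1 - u 1 * (s • v₁) 0 = 0 := (mem_dir _).mp hmd
      have e0 : (s • v₁) 0 = s * v₁ 0 := rfl
      have e1 : (s • v₁) 1 = s * v₁ 1 := rfl
      rw [e0, e1] at hd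
      have hzero : s * B₁ = 0 := by rw [hB₁def]; linear_combination hd
      rcases mul_eq_zero.mp hzero with h | h
      · exact hs.ne' h
      · exact hB₁ne h
end
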